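/- arXiv:2403.01403 — 2 statements merged into one kernel-verified Lean document; each statement's English description precedes it below -/
import Mathlib

section
/- If the time points t₁,…,t_n are pairwise distinct, the matrix with entries Σ_{ij} = σ² exp(-|t_i - t_j|/T) (σ > 0, T > 0) is strictly positive definite, hence invertible. -/
/-!
Doob's representation of the Ornstein–Uhlenbeck process as a time-changed Brownian motion:
`exp (-|s - t| / T) = exp (-s / T) * min (exp (2 s / T)) (exp (2 t / T)) * exp (-t / T)`,
so the kernel matrix is a diagonal congruence of the Brownian covariance matrix `min (aᵢ) (aⱼ)`
at the distinct positive times `aᵢ = exp (2 tᵢ / T)`. After sorting the times, that matrix is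
positive definite by induction: subtracting the smallest time `a₀` splits its quadratic form
into `a₀ (∑ xᵢ)²` plus the same form for the remaining shifted times and coordinates.
-/

open Matrix Real

namespace Matrix

variable {ι : Type*}

def minKernel (a : ι → ℝ) : Matrix ι ι ℝ := of fun i j => min (a i) (a j)

lemma isHermitian_minKernel (a : ι → ℝ) : (minKernel a).IsHermitian := by
  ext i j
  simp [minKernel, min_comm]

lemma dotProduct_minKernel_add_const_mulVec [Fintype ι] (a : ι → ℝ) (c : ℝ)
    (x : ι → ℝ) :
    x ⬝ᵥ minKernel (fun i => a i + c) *ᵥ x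
      = c * (∑ i, x i) ^ 2 + x ⬝ᵥ minKernel a *ᵥ x := by
  simp only [dotProduct, mulVec, minKernel, of_apply, min_add_add_right, sq, Finset.sum_mul,
    Finset.mul_sum, ← Finset.sum_add_distrib]
  exact Finset.sum_congr rfl fun i _ => Finset.sum_congr rfl fun j _ => by ring

lemma dotProduct_minKernel_cons_zero_mulVec {n : ℕ} (b : Fin n → ℝ) (hb : ∀ i, 0 ≤ b i)
    (x : Fin (n + 1) → ℝ) :
    x ⬝ᵥ minKernel (Fin.cons 0 b : Fin (n + 1) → ℝ) *ᵥ x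
      = Fin.tail x ⬝ᵥ minKernel b *ᵥ Fin.tail x := by
  simp [dotProduct, mulVec, minKernel, Fin.sum_univ_succ, hb, Fin.tail]

lemma posDef_minKernel_of_strictMono {n : ℕ} (a : Fin n → ℝ) (ha : StrictMono a)
    (hpos : ∀ i, 0 < a i) : (minKernel a).PosDef := by
  refine PosDef.of_dotProduct_mulVec_pos (isHermitian_minKernel a) fun x hx => ?_
  rw [star_trivial]
  induction n with
  | zero => exact absurd (Subsingleton.elim x 0) hx
  | succ n ih =>
    set b : Fin n → ℝ := fun i => a i.succ - a 0
    have hb : StrictMono b := fun i j hij =>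
      sub_lt_sub_right (ha (Fin.succ_lt_succ_iff.2 hij)) _
    have hsplit : a = fun i => (Fin.cons 0 b : Fin (n + 1) → ℝ) i + a 0 := by
      ext i
      cases i using Fin.cases <;> simp [b]
    rw [hsplit, dotProduct_minKernel_add_const_mulVec,
      dotProduct_minKernel_cons_zero_mulVec b fun i => (sub_pos.2 (ha i.succ_pos)).le]
    by_cases htail : Fin.tail x = 0
    · have hx0 : x 0 ≠ 0 := fun h0 => hx <| funext fun i => by
        cases i using Fin.cases
        exacts [h0, congrFun htail _]
      have htail_sum : ∑ i : Fin n, x i.succ = 0 :=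
        Finset.sum_eq_zero fun i _ => congrFun htail i
      rw [htail, mulVec_zero, dotProduct_zero, add_zero, Fin.sum_univ_succ, htail_sum, add_zero]
      exact mul_pos (hpos 0) (by positivity)
    · exact add_pos_of_nonneg_of_pos (by have := hpos 0; positivity)
        (ih b hb (fun i => sub_pos.2 (ha i.succ_pos)) (Fin.tail x) htail)

lemma posDef_minKernel [Fintype ι] (a : ι → ℝ) (ha : Function.Injective a)
    (hpos : ∀ i, 0 < a i) : (minKernel a).PosDef := by
  set g := (Fintype.equivFin ι).symm
  let e := (Tuple.sort (a ∘ g)).trans g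
  have he : StrictMono (a ∘ e) :=
    (Tuple.monotone_sort (a ∘ g)).strictMono_of_injective (ha.comp e.injective)
  convert (posDef_minKernel_of_strictMono (a ∘ e) he fun i => hpos _).submatrix e.symm.injective
  ext i j
  simp [minKernel]

lemma PosDef.diagonal_mul_mul_diagonal [Fintype ι] [DecidableEq ι] {K : Type*} [Field K]
    [PartialOrder K] [StarRing K]
    {A : Matrix ι ι K} (hA : A.PosDef) {v : ι → K} (hv : ∀ i, v i ≠ 0) :
    (diagonal (star v) * A * diagonal v).PosDef := by
  simpa [diagonal_conjTranspose] using hA.conjTranspose_mul_mul_same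
    (mulVec_injective_iff_isUnit.2 (isUnit_diagonal.2 (Pi.isUnit_iff.2 fun i => (hv i).isUnit)))

end Matrix

lemma Real.exp_neg_abs_sub_div {T : ℝ} (hT : 0 < T) (s t : ℝ) :
    exp (-|s - t| / T)
      = exp (-s / T) * min (exp (2 * s / T)) (exp (2 * t / T)) * exp (-t / T) := by
  rw [← exp_monotone.map_min, ← exp_add, ← exp_add]
  congr 1
  rcases le_total s t with h | h
  · rw [min_eq_left (by gcongr), abs_of_nonpos (sub_nonpos.2 h)]
    ring
  · rw [min_eq_right (by gcongr), abs_of_nonneg (sub_nonneg.2 h)]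
    ring

/-- For pairwise distinct time points, the exponential kernel matrix
Σᵢⱼ = σ² exp(-|tᵢ - tⱼ|/T) is strictly positive definite, hence invertible. -/
theorem exp_kernel_posDef {n : ℕ} (σ T : ℝ) (hσ : 0 < σ) (hT : 0 < T)
    (t : Fin n → ℝ) (ht : Function.Injective t) :
    (Matrix.of fun i j : Fin n => σ ^ 2 * Real.exp (-|t i - t j| / T)).PosDef ∧
      IsUnit (Matrix.of fun i j : Fin n => σ ^ 2 * Real.exp (-|t i - t j| / T)) := by
  set f : Fin n → ℝ := fun i => exp (2 * t i / T)
  set v : Fin n → ℝ := fun i => σ * exp (-t i / T)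
  have hf : Function.Injective f := fun i j h => ht <| by
    simpa [f, hT.ne'] using exp_injective h
  have hfactor : (of fun i j => σ ^ 2 * exp (-|t i - t j| / T))
      = diagonal (star v) * minKernel f * diagonal v := by
    ext i j
    simp only [diagonal_mul, mul_diagonal, minKernel, of_apply, star_trivial, v, f,
      exp_neg_abs_sub_div hT]
    ring
  have hpd := hfactor ▸ (posDef_minKernel f hf fun i => exp_pos _).diagonal_mul_mul_diagonal
    fun i => (mul_pos hσ (exp_pos _)).ne'
  exact ⟨hpd, hpd.isUnit⟩
end

section
/- Full misspecified Bayes risk formula: with H = Gᵀ Σ_ε⁻¹ G, H̃ = Gᵀ Σ_ε⁻¹ G̃, Σ_pos = (H + Σ_pr⁻¹)⁻¹, data generated as Y = G̃ m + ε with m ~ N(μ_pr, Σ_pr) and ε ~ N(0, Σ_ε) independent, and μ_pos = Σ_pos(Σ_pr⁻¹ μ_pr + Gᵀ Σ_ε⁻¹ Y), the Bayes risk E[‖μ_pos - m‖²] equals Tr(Σ_pos) + Tr(Σ_pos (H̃ - H)(Σ_pr + μ_pr μ_prᵀ)(H̃ - H)ᵀ Σ_pos) - Tr(Σ_pos ((H̃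 - H) + (H̃ - H)ᵀ) Σ_pos). -/
/-!
Writing `x = μ + L z` with `L Lᵀ = S` turns every integral against `gaussPdf μ S` into an
expectation under the standard Gaussian measure on `ℝⁿ` (the product of `N(0, 1)`), whose mean is
`0` and whose covariance is the identity; hence `E ‖C x + u‖² = tr (C S Cᵀ) + ‖C μ + u‖²`.
The error of the posterior mean splits as `B ε + (A m + b)` with `B = Σ_pos Gᵀ Σ_ε⁻¹`,
`A = Σ_pos (H̃ - H - Σ_pr⁻¹)` and `b = Σ_pos Σ_pr⁻¹ μ_pr`. Applying that formula first in `ε` and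
then in `m`, the risk is the trace of `B Σ_ε Bᵀ + A Σ_pr Aᵀ + (A μ_pr + b)(A μ_pr + b)ᵀ`, and the
identity `Σ_pos (H + Σ_pr⁻¹) = 1` rearranges this matrix into the stated one.
-/

open Matrix Real MeasureTheory

/-- The density of the multivariate Gaussian N(μ, S) on ℝⁿ. -/
noncomputable def gaussPdf {n : ℕ} (μ : Fin n → ℝ) (S : Matrix (Fin n) (Fin n) ℝ)
    (x : Fin n → ℝ) : ℝ :=
  (Real.sqrt ((2 * Real.pi) ^ n * S.det))⁻¹ *
    Real.exp (-(1/2) * ((x - μ) ⬝ᵥ (S⁻¹ *ᵥ (x - μ))))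

open ProbabilityTheory
open scoped ENNReal

noncomputable abbrev stdGaussianPi (n : ℕ) : Measure (Fin n → ℝ) :=
  Measure.pi fun _ => gaussianReal 0 1

section StdGaussianPi

variable {n k : ℕ}

lemma memLp_eval_stdGaussianPi {p : ℝ≥0∞} (hp : p ≠ ∞) (i : Fin n) :
    MemLp (fun z => z i) p (stdGaussianPi n) :=
  (memLp_id_gaussianReal' p hp).comp_measurePreserving (measurePreserving_eval _ i)

lemma integral_eval_stdGaussianPi (i : Fin n) : ∫ z, z i ∂stdGaussianPi n = 0 := by
  rw [integral_eval, integral_id_gaussianReal]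

lemma integral_eval_mul_eval_stdGaussianPi (i j : Fin n) :
    ∫ z, z i * z j ∂stdGaussianPi n = if i = j then 1 else 0 := by
  split_ifs with hij
  · subst hij
    rw [integral_comp_eval (f := fun x => x * x) (by fun_prop)]
    simpa [sq] using (variance_of_integral_eq_zero (μ := gaussianReal 0 1) aemeasurable_id'
      (by simp)).symm
  · have hind : IndepFun (fun z : Fin n → ℝ => z i) (fun z => z j) (stdGaussianPi n) :=
      (iIndepFun_pi (X := fun _ x => x) fun _ => aemeasurable_id').indepFun hij
    rw [show (fun z : Fin n → ℝ => z i * z j) = (fun z => z i) * (fun z => z j) from rfl,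
      hind.integral_mul_eq_mul_integral
        (memLp_eval_stdGaussianPi ENNReal.one_ne_top i).aestronglyMeasurable
        (memLp_eval_stdGaussianPi ENNReal.one_ne_top j).aestronglyMeasurable,
      integral_eval_stdGaussianPi, zero_mul]

lemma integrable_eval_mul_eval_stdGaussianPi (i j : Fin n) :
    Integrable (fun z => z i * z j) (stdGaussianPi n) :=
  (memLp_eval_stdGaussianPi (p := 2) ENNReal.ofNat_ne_top i).integrable_mul
    (memLp_eval_stdGaussianPi (p := 2) ENNReal.ofNat_ne_top j)

lemma memLp_dotProduct_stdGaussianPi {p : ℝ≥0∞} (hp : p ≠ ∞) (a : Fin n → ℝ) :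
    MemLp (fun z => a ⬝ᵥ z) p (stdGaussianPi n) :=
  memLp_finsetSum _ fun i _ => (memLp_eval_stdGaussianPi hp i).const_mul (a i)

lemma memLp_dotProduct_add_stdGaussianPi {p : ℝ≥0∞} (hp : p ≠ ∞) (a : Fin n → ℝ) (c : ℝ) :
    MemLp (fun z => a ⬝ᵥ z + c) p (stdGaussianPi n) :=
  (memLp_dotProduct_stdGaussianPi hp a).add (memLp_const c)

lemma integral_dotProduct_stdGaussianPi (a : Fin n → ℝ) :
    ∫ z, a ⬝ᵥ z ∂stdGaussianPi n = 0 := by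
  simp only [dotProduct]
  rw [integral_finsetSum _ fun i _ =>
    ((memLp_eval_stdGaussianPi ENNReal.one_ne_top i).integrable le_rfl).const_mul (a i)]
  simp [integral_const_mul, integral_eval_stdGaussianPi]

lemma integral_dotProduct_mul_dotProduct_stdGaussianPi (a b : Fin n → ℝ) :
    ∫ z, (a ⬝ᵥ z) * (b ⬝ᵥ z) ∂stdGaussianPi n = a ⬝ᵥ b := by
  have hexp : ∀ z : Fin n → ℝ, (a ⬝ᵥ z) * (b ⬝ᵥ z) = ∑ i, ∑ j, a i * b j * (z i * z j) := by
    intro z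
    simp only [dotProduct, Finset.sum_mul_sum]
    exact Finset.sum_congr rfl fun i _ => Finset.sum_congr rfl fun j _ => by ring
  simp_rw [hexp]
  rw [integral_finsetSum _ fun i _ => integrable_finsetSum _ fun j _ =>
    (integrable_eval_mul_eval_stdGaussianPi i j).const_mul _]
  simp_rw [integral_finsetSum _ fun j _ =>
      (integrable_eval_mul_eval_stdGaussianPi _ j).const_mul _,
    integral_const_mul, integral_eval_mul_eval_stdGaussianPi]
  simp [dotProduct]

lemma integrable_dotProduct_add_mul_dotProduct_add_stdGaussianPi (a b : Fin n → ℝ) (c d : ℝ) :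
    Integrable (fun z => (a ⬝ᵥ z + c) * (b ⬝ᵥ z + d)) (stdGaussianPi n) :=
  (memLp_dotProduct_add_stdGaussianPi (p := 2) ENNReal.ofNat_ne_top a c).integrable_mul
    (memLp_dotProduct_add_stdGaussianPi (p := 2) ENNReal.ofNat_ne_top b d)

lemma integral_dotProduct_add_mul_dotProduct_add_stdGaussianPi (a b : Fin n → ℝ) (c d : ℝ) :
    ∫ z, (a ⬝ᵥ z + c) * (b ⬝ᵥ z + d) ∂stdGaussianPi n = a ⬝ᵥ b + c * d := by
  have hexp : ∀ z : Fin n → ℝ, (a ⬝ᵥ z + c) * (b ⬝ᵥ z + d) =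
      (a ⬝ᵥ z) * (b ⬝ᵥ z) + ((d • a + c • b) ⬝ᵥ z + c * d) := by
    intro z
    rw [add_dotProduct, smul_dotProduct, smul_dotProduct, smul_eq_mul, smul_eq_mul]
    ring
  have hint : Integrable (fun z => (a ⬝ᵥ z) * (b ⬝ᵥ z)) (stdGaussianPi n) :=
    (memLp_dotProduct_stdGaussianPi (p := 2) ENNReal.ofNat_ne_top a).integrable_mul
      (memLp_dotProduct_stdGaussianPi (p := 2) ENNReal.ofNat_ne_top b)
  simp_rw [hexp]
  rw [integral_add hint
      ((memLp_dotProduct_add_stdGaussianPi ENNReal.one_ne_top _ _).integrable le_rfl),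
    integral_add ((memLp_dotProduct_stdGaussianPi ENNReal.one_ne_top _).integrable le_rfl)
      (integrable_const _),
    integral_dotProduct_mul_dotProduct_stdGaussianPi, integral_dotProduct_stdGaussianPi]
  simp

lemma dotProduct_self_mulVec_add (D : Matrix (Fin k) (Fin n) ℝ) (w : Fin k → ℝ)
    (z : Fin n → ℝ) :
    (D *ᵥ z + w) ⬝ᵥ (D *ᵥ z + w) = ∑ l, (D l ⬝ᵥ z + w l) * (D l ⬝ᵥ z + w l) := rfl

lemma integrable_dotProduct_self_mulVec_add_stdGaussianPi (D : Matrix (Fin k) (Fin n) ℝ)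
    (w : Fin k → ℝ) :
    Integrable (fun z => (D *ᵥ z + w) ⬝ᵥ (D *ᵥ z + w)) (stdGaussianPi n) :=
  integrable_finsetSum _ fun l _ =>
    integrable_dotProduct_add_mul_dotProduct_add_stdGaussianPi (D l) (D l) (w l) (w l)

lemma integral_dotProduct_self_mulVec_add_stdGaussianPi (D : Matrix (Fin k) (Fin n) ℝ)
    (w : Fin k → ℝ) :
    ∫ z, (D *ᵥ z + w) ⬝ᵥ (D *ᵥ z + w) ∂stdGaussianPi n = (D * Dᵀ).trace + w ⬝ᵥ w := by
  simp_rw [dotProduct_self_mulVec_add]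
  rw [integral_finsetSum _ fun l _ =>
    integrable_dotProduct_add_mul_dotProduct_add_stdGaussianPi (D l) (D l) (w l) (w l)]
  simp_rw [integral_dotProduct_add_mul_dotProduct_add_stdGaussianPi]
  simp [Finset.sum_add_distrib, trace, mul_apply, dotProduct]

lemma stdGaussianPi_eq_withDensity :
    stdGaussianPi n =
      volume.withDensity fun z => ENNReal.ofReal (∏ i, gaussianPDFReal 0 1 (z i)) := by
  refine Measure.pi_eq fun s hs => ?_
  rw [withDensity_apply _ (MeasurableSet.univ_pi hs), volume_pi, Measure.restrict_pi_pi,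
    ← ofReal_integral_eq_lintegral_ofReal
      (Integrable.fintype_prod fun i => (integrable_gaussianPDFReal 0 1).restrict)
      (ae_of_all _ fun z => Finset.prod_nonneg fun i _ => gaussianPDFReal_nonneg 0 1 (z i)),
    integral_fintype_prod_eq_prod, ENNReal.ofReal_prod_of_nonneg
      fun i _ => integral_nonneg fun x => gaussianPDFReal_nonneg 0 1 x]
  exact Finset.prod_congr rfl fun i _ => (gaussianReal_apply_eq_integral 0 one_ne_zero (s i)).symm

lemma integral_stdGaussianPi_eq (f : (Fin n → ℝ) → ℝ) :
    ∫ z, f z ∂stdGaussianPi n = ∫ z, (∏ i, gaussianPDFReal 0 1 (z i)) * f z := by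
  rw [stdGaussianPi_eq_withDensity, integral_withDensity_eq_integral_toReal_smul
    (by fun_prop) (ae_of_all _ fun _ => ENNReal.ofReal_lt_top)]
  simp_rw [ENNReal.toReal_ofReal (Finset.prod_nonneg fun i _ => gaussianPDFReal_nonneg 0 1 _),
    smul_eq_mul]

lemma prod_gaussianPDFReal (z : Fin n → ℝ) :
    ∏ i, gaussianPDFReal 0 1 (z i) = (√(2 * π))⁻¹ ^ n * exp (-(1 / 2) * (z ⬝ᵥ z)) := by
  simp only [gaussianPDFReal, Finset.prod_mul_distrib, Finset.prod_const, Finset.card_univ,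
    Fintype.card_fin, ← Real.exp_sum, dotProduct, Finset.mul_sum]
  congr 2
  · simp
  · refine Finset.sum_congr rfl fun i _ => ?_
    simp only [NNReal.coe_one, mul_one, sub_zero]
    ring

end StdGaussianPi

section GaussPdf

variable {n k : ℕ}

lemma dotProduct_mulVec_inv_mul_transpose {L : Matrix (Fin n) (Fin n) ℝ} (hL : IsUnit L.det)
    (z : Fin n → ℝ) : (L *ᵥ z) ⬝ᵥ ((L * Lᵀ)⁻¹ *ᵥ (L *ᵥ z)) = z ⬝ᵥ z := by
  rw [Matrix.mul_inv_rev, ← mulVec_mulVec, mulVec_mulVec z L⁻¹, nonsing_inv_mul _ hL,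
    one_mulVec, dotProduct_mulVec, vecMul_mulVec, ← transpose_nonsing_inv, ← transpose_mul,
    nonsing_inv_mul _ hL, transpose_one, vecMul_one]

lemma gaussPdf_add_mulVec {S L : Matrix (Fin n) (Fin n) ℝ} (hL : L * Lᵀ = S) (hdet : L.det ≠ 0)
    (μ z : Fin n → ℝ) :
    |L.det| * gaussPdf μ S (μ + L *ᵥ z) = ∏ i, gaussianPDFReal 0 1 (z i) := by
  have hsqrt : √((2 * π) ^ n) = √(2 * π) ^ n := by
    rw [Real.sqrt_eq_iff_mul_self_eq (by positivity) (by positivity), ← mul_pow,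
      Real.mul_self_sqrt (by positivity)]
  subst hL
  rw [gaussPdf, add_sub_cancel_left,
    dotProduct_mulVec_inv_mul_transpose (isUnit_iff_ne_zero.2 hdet), prod_gaussianPDFReal,
    det_mul, det_transpose, ← sq, Real.sqrt_mul (by positivity), Real.sqrt_sq_eq_abs, hsqrt,
    mul_inv, inv_pow]
  field_simp

lemma integral_gaussPdf_mul_eq_integral_stdGaussianPi {S L : Matrix (Fin n) (Fin n) ℝ}
    (hL : L * Lᵀ = S) (hdet : L.det ≠ 0) (μ : Fin n → ℝ) (f : (Fin n → ℝ) → ℝ) :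
    ∫ x, gaussPdf μ S x * f x = ∫ z, f (μ + L *ᵥ z) ∂stdGaussianPi n := by
  have hunit : IsUnit L := (isUnit_iff_isUnit_det L).2 (isUnit_iff_ne_zero.2 hdet)
  set A : (Fin n → ℝ) →L[ℝ] (Fin n → ℝ) := LinearMap.toContinuousLinearMap (toLin' L)
  have hderiv : ∀ z ∈ Set.univ, HasFDerivWithinAt (fun z => μ + L *ᵥ z) A Set.univ z :=
    fun z _ => (A.hasFDerivAt.const_add μ).hasFDerivWithinAt
  have hinj : Set.InjOn (fun z => μ + L *ᵥ z) Set.univ := fun z _ w _ h =>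
    mulVec_injective_iff_isUnit.2 hunit (add_left_cancel h)
  have himage : (fun z => μ + L *ᵥ z) '' Set.univ = Set.univ := by
    refine Set.image_univ_of_surjective fun x => ⟨L⁻¹ *ᵥ (x - μ), ?_⟩
    simp [mulVec_mulVec, mul_nonsing_inv _ ((isUnit_iff_isUnit_det L).1 hunit)]
  have hdetA : A.det = L.det := LinearMap.det_toLin' L
  have hcov := integral_image_eq_integral_abs_det_fderiv_smul volume MeasurableSet.univ hderiv
    hinj fun x => gaussPdf μ S x * f x
  rw [himage, Measure.restrict_univ] at hcov
  rw [hcov, integral_stdGaussianPi_eq]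
  refine integral_congr_ae (ae_of_all _ fun z => ?_)
  simp only [hdetA, smul_eq_mul, ← gaussPdf_add_mulVec hL hdet μ z]
  ring

open scoped MatrixOrder in
lemma exists_mul_transpose_eq_of_posDef {S : Matrix (Fin n) (Fin n) ℝ} (hS : S.PosDef) :
    ∃ L : Matrix (Fin n) (Fin n) ℝ, L * Lᵀ = S ∧ L.det ≠ 0 := by
  obtain ⟨L, hL, rfl⟩ :=
    CStarAlgebra.isStrictlyPositive_iff_eq_mul_star_self.mp hS.isStrictlyPositive
  exact ⟨L, rfl, ((isUnit_iff_isUnit_det L).1 hL).ne_zero⟩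

lemma integral_gaussPdf_mul_const_add_dotProduct_self {S : Matrix (Fin n) (Fin n) ℝ}
    (hS : S.PosDef) (μ : Fin n → ℝ) (C : Matrix (Fin k) (Fin n) ℝ) (u : Fin k → ℝ) (c : ℝ) :
    ∫ x, gaussPdf μ S x * (c + (C *ᵥ x + u) ⬝ᵥ (C *ᵥ x + u)) =
      c + (C * S * Cᵀ).trace + (C *ᵥ μ + u) ⬝ᵥ (C *ᵥ μ + u) := by
  obtain ⟨L, hL, hdet⟩ := exists_mul_transpose_eq_of_posDef hS
  have hshift : ∀ z, C *ᵥ (μ + L *ᵥ z) + u = (C * L) *ᵥ z + (C *ᵥ μ + u) := by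
    intro z
    rw [mulVec_add, mulVec_mulVec]
    abel
  rw [integral_gaussPdf_mul_eq_integral_stdGaussianPi hL hdet]
  simp_rw [hshift]
  rw [integral_add (integrable_const c) (integrable_dotProduct_self_mulVec_add_stdGaussianPi _ _),
    integral_const, integral_dotProduct_self_mulVec_add_stdGaussianPi, ← hL]
  simp [Matrix.mul_assoc, transpose_mul, add_assoc]

end GaussPdf

section PosteriorAlgebra

variable {ι κ R : Type*} [Fintype ι] [Fintype κ] [CommRing R]

lemma dotProduct_self_mulVec_eq_trace (P : Matrix κ ι R) (v : ι → R) :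
    (P *ᵥ v) ⬝ᵥ (P *ᵥ v) = (P * vecMulVec v v * Pᵀ).trace := by
  rw [← trace_vecMulVec, mul_vecMulVec, vecMulVec_mul, vecMul_transpose]

lemma posterior_mean_sub_eq [DecidableEq ι] {Spos H P : Matrix ι ι R} (hpos : Spos * (H + P) = 1)
    (F : Matrix ι κ R) (N : Matrix κ κ R) (Gt : Matrix κ ι R) (μ m : ι → R) (e : κ → R) :
    Spos *ᵥ (P *ᵥ μ + F *ᵥ (N *ᵥ (Gt *ᵥ m + e))) - m =
      (Spos * F * N) *ᵥ e + ((Spos * (F * N * Gt - H - P)) *ᵥ m + Spos *ᵥ (P *ᵥ μ)) := by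
  have hA : Spos * (F * N * Gt - H - P) = Spos * (F * N * Gt) - 1 := by
    rw [← hpos]; noncomm_ring
  rw [hA]
  simp only [mulVec_add, mulVec_mulVec, sub_mulVec, one_mulVec, Matrix.mul_assoc]
  abel

lemma posterior_error_covariance [DecidableEq ι] {Spos H K P Spr M : Matrix ι ι R}
    (hpos : Spos * (H + P) = 1) (hPSpr : P * Spr = 1) (hSprP : Spr * P = 1) (hP : Pᵀ = P)
    (hSpos : Sposᵀ = Spos) :
    Spos * H * Spos + Spos * (K - P) * Spr * (Spos * (K - P))ᵀ + Spos * K * M * (Spos * K)ᵀ =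
      Spos + Spos * K * (Spr + M) * Kᵀ * Spos - Spos * (K + Kᵀ) * Spos := by
  have hmid : (K - P) * Spr * (K - P)ᵀ = K * Spr * Kᵀ - (K + Kᵀ) + P := by
    rw [transpose_sub, hP, sub_mul, hPSpr]
    simp only [sub_mul, mul_sub, Matrix.mul_assoc, hSprP, Matrix.mul_one, Matrix.one_mul]
    abel
  calc _ = Spos * H * Spos + Spos * ((K - P) * Spr * (K - P)ᵀ) * Spos
          + Spos * K * M * Kᵀ * Spos := by
        simp only [transpose_mul, hSpos, Matrix.mul_assoc]
    _ = Spos * (H + P) * Spos + Spos * K * (Spr + M) * Kᵀ * Spos - Spos * (K + Kᵀ) * Spos := by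
        rw [hmid]; noncomm_ring
    _ = _ := by rw [hpos, Matrix.one_mul]

end PosteriorAlgebra

lemma posDef_transpose_mul_inv_mul_add_inv {ι κ : Type*} [Fintype ι] [Fintype κ] [DecidableEq ι]
    [DecidableEq κ] {Se : Matrix κ κ ℝ} {Spr : Matrix ι ι ℝ} (hε : Se.PosDef) (hpr : Spr.PosDef)
    (G : Matrix κ ι ℝ) : (Gᵀ * Se⁻¹ * G + Spr⁻¹).PosDef :=
  PosDef.posSemidef_add (by simpa [conjTranspose_eq_transpose_of_trivial] using
    hε.inv.posSemidef.conjTranspose_mul_mul_same G) hpr.inv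

/-- Full misspecified Bayes risk formula: with data generated as Y = G̃ m + ε but
inverted with model matrix G,
Risk = Tr(Spos) + Tr(Spos (H̃-H)(Spr + μpr μprᵀ)(H̃-H)ᵀ Spos)
         - Tr(Spos ((H̃-H) + (H̃-H)ᵀ) Spos). -/
theorem bayes_risk_misspecified {d q : ℕ}
    (G Gt : Matrix (Fin q) (Fin d) ℝ)
    (Spr : Matrix (Fin d) (Fin d) ℝ) (Se : Matrix (Fin q) (Fin q) ℝ)
    (hpr : Spr.PosDef) (hε : Se.PosDef)
    (μpr : Fin d → ℝ)
    (H Ht : Matrix (Fin d) (Fin d) ℝ)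
    (hH : H = Gᵀ * Se⁻¹ * G) (hHt : Ht = Gᵀ * Se⁻¹ * Gt)
    (Spos : Matrix (Fin d) (Fin d) ℝ)
    (hSpos : Spos = (H + Spr⁻¹)⁻¹)
    (μpos : (Fin q → ℝ) → (Fin d → ℝ))
    (hμpos : ∀ y, μpos y = Spos *ᵥ (Spr⁻¹ *ᵥ μpr + Gᵀ *ᵥ (Se⁻¹ *ᵥ y))) :
    (∫ m : Fin d → ℝ, gaussPdf μpr Spr m *
        ∫ e : Fin q → ℝ, gaussPdf 0 Se e *
          ((μpos (Gt *ᵥ m + e) - m) ⬝ᵥ (μpos (Gt *ᵥ m + e) - m))) =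
      Spos.trace +
        (Spos * (Ht - H) * (Spr + Matrix.vecMulVec μpr μpr) * (Ht - H)ᵀ * Spos).trace -
        (Spos * ((Ht - H) + (Ht - H)ᵀ) * Spos).trace := by
  have hprec : (H + Spr⁻¹).PosDef := hH ▸ posDef_transpose_mul_inv_mul_add_inv hε hpr G
  have hSposT : Sposᵀ = Spos := hSpos ▸ (isHermitian_iff_isSymm.1 hprec.inv.isHermitian).eq
  have hpos : Spos * (H + Spr⁻¹) = 1 := hSpos ▸ nonsing_inv_mul _ hprec.det_pos.ne'.isUnit
  set K := Ht - H
  set A := Spos * (K - Spr⁻¹)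
  set B := Spos * Gᵀ * Se⁻¹
  set b := Spos *ᵥ (Spr⁻¹ *ᵥ μpr)
  have herr : ∀ m e, μpos (Gt *ᵥ m + e) - m = B *ᵥ e + (A *ᵥ m + b) := fun m e => by
    simp only [hμpos, A, K, hHt]
    exact posterior_mean_sub_eq hpos Gᵀ Se⁻¹ Gt μpr m e
  have hinner : ∀ v, ∫ e, gaussPdf 0 Se e * ((B *ᵥ e + v) ⬝ᵥ (B *ᵥ e + v)) =
      (B * Se * Bᵀ).trace + v ⬝ᵥ v := fun v => by
    simpa using integral_gaussPdf_mul_const_add_dotProduct_self hε 0 B v 0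
  have hmean : A *ᵥ μpr + b = (Spos * K) *ᵥ μpr := by
    simp only [A, b, mulVec_mulVec, ← add_mulVec]
    noncomm_ring
  have hnoise : B * Se * Bᵀ = Spos * H * Spos := by
    simp only [B, hH, transpose_mul, (isHermitian_iff_isSymm.1 hε.inv.isHermitian).eq, hSposT,
      transpose_transpose, Matrix.mul_assoc, nonsing_inv_mul _ hε.det_pos.ne'.isUnit,
      Matrix.one_mul]
  simp_rw [herr, hinner]
  rw [integral_gaussPdf_mul_const_add_dotProduct_self hpr μpr A b, hmean,
    dotProduct_self_mulVec_eq_trace, hnoise, ← trace_add, ← trace_add,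
    posterior_error_covariance hpos (nonsing_inv_mul _ hpr.det_pos.ne'.isUnit)
      (mul_nonsing_inv _ hpr.det_pos.ne'.isUnit)
      (isHermitian_iff_isSymm.1 hpr.inv.isHermitian).eq hSposT,
    trace_sub, trace_add]
end
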